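/- arXiv:2303.00374 — 3 statements merged into one kernel-verified Lean document; each statement's English description precedes it below -/
import Mathlib

section
/- The MCL limited flux for conservative quantities satisfies the bar-state bounds: with Δf^+ = λ min{ρ_i^max − ρ̄, ρ̄ − ρ_j^min} and Δf^- = λ max{ρ_i^min − ρ̄, ρ̄ − ρ_j^max}, and Δf^Lim = min{Δf, Δf^+} if Δf ≥ 0 and Δf^Lim = max{Δf, Δf^-} otherwise, if ρ_i^min ≤ ρ̄ ≤ ρ_i^max and ρ_j^min ≤ ρ̄ ≤ ρ_j^max and λ > 0, then ρ_i^min ≤ ρ̄ + Δf^Lim/λ ≤ ρ_i^max and ρ_j^min ≤ ρ̄ − Δf^Lim/λ ≤ ρ_j^max. -/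
/-- The MCL limited flux for conservative quantities satisfies the bar-state bounds. -/
theorem mcl_limited_flux_satisfies_bounds
    (ρbar ρimin ρimax ρjmin ρjmax lam Δf : ℝ)
    (hlam : 0 < lam)
    (hi : ρimin ≤ ρbar ∧ ρbar ≤ ρimax)
    (hj : ρjmin ≤ ρbar ∧ ρbar ≤ ρjmax)
    (ΔfLim : ℝ)
    (hLim : ΔfLim = if 0 ≤ Δf
        then min Δf (lam * min (ρimax - ρbar) (ρbar - ρjmin))
        else max Δf (lam * max (ρimin - ρbar) (ρbar - ρjmax))) :
    (ρimin ≤ ρbar + ΔfLim / lam ∧ ρbar + ΔfLim / lam ≤ ρimax) ∧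
    (ρjmin ≤ ρbar - ΔfLim / lam ∧ ρbar - ΔfLim / lam ≤ ρjmax) := by
  obtain ⟨hi1, hi2⟩ := hi
  obtain ⟨hj1, hj2⟩ := hj
  have key : lam * (ρimin - ρbar) ≤ ΔfLim ∧ ΔfLim ≤ lam * (ρimax - ρbar) ∧
      lam * (ρbar - ρjmax) ≤ ΔfLim ∧ ΔfLim ≤ lam * (ρbar - ρjmin) := by
    subst hLim
    split_ifs with h
    · have ha : (0:ℝ) ≤ ρimax - ρbar := by linarith
      have hb : (0:ℝ) ≤ ρbar - ρjmin := by linarith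
      have hmin : (0:ℝ) ≤ min Δf (lam * min (ρimax - ρbar) (ρbar - ρjmin)) :=
        le_min h (by positivity)
      have h1 := min_le_right Δf (lam * min (ρimax - ρbar) (ρbar - ρjmin))
      have h2 := min_le_left (ρimax - ρbar) (ρbar - ρjmin)
      have h3 := min_le_right (ρimax - ρbar) (ρbar - ρjmin)
      refine ⟨by nlinarith, by nlinarith, by nlinarith, by nlinarith⟩
    · have ha : ρimin - ρbar ≤ (0:ℝ) := by linarith
      have hb : ρbar - ρjmax ≤ (0:ℝ) := by linarith
      have hm : max (ρimin - ρbar) (ρbar - ρjmax) ≤ 0 := max_le ha hb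
      have hmax : max Δf (lam * max (ρimin - ρbar) (ρbar - ρjmax)) ≤ 0 :=
        max_le (le_of_not_ge h) (by nlinarith)
      have h1 := le_max_right Δf (lam * max (ρimin - ρbar) (ρbar - ρjmax))
      have h2 := le_max_left (ρimin - ρbar) (ρbar - ρjmax)
      have h3 := le_max_right (ρimin - ρbar) (ρbar - ρjmax)
      refine ⟨by nlinarith, by nlinarith, by nlinarith, by nlinarith⟩
  obtain ⟨k1, k2, k3, k4⟩ := key
  have hk1 : ρimin - ρbar ≤ ΔfLim / lam := by
    rw [le_div_iff₀ hlam, mul_comm]; exact k1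
  have hk2 : ΔfLim / lam ≤ ρimax - ρbar := by
    rw [div_le_iff₀ hlam, mul_comm]; exact k2
  have hk3 : ρbar - ρjmax ≤ ΔfLim / lam := by
    rw [le_div_iff₀ hlam, mul_comm]; exact k3
  have hk4 : ΔfLim / lam ≤ ρbar - ρjmin := by
    rw [div_le_iff₀ hlam, mul_comm]; exact k4
  exact ⟨⟨by linarith, by linarith⟩, ⟨by linarith, by linarith⟩⟩
end

section
/- The sequential limiter enforces products of bounds: with ρ̄^Lim > 0, φ^min ≤ φ̄ ≤ φ^max at both nodes i and j, λ > 0, Δg^+ = λ ρ̄^Lim min{φ_i^max − φ̄, φ̄ − φ_j^min}, Δg^- = λ ρ̄^Lim max{φ_i^min − φ̄, φ̄ − φ_j^max}, and Δg^Lim = min{Δg, Δg^+} if Δg ≥ 0 else max{Δg, Δg^-}, one has ρ̄^Lim φ_i^min ≤ ρ̄^Lim φ̄ + Δg^Lim/λ ≤ ρ̄^Lim φ_i^max and ρ̄^Lim φ_j^min ≤ ρ̄^Lim φ̄ − Δg^Lim/λ ≤ ρ̄^Lim φ_j^max. -/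
/-- The sequential limiter enforces the products of bounds on the `φ` bar states. -/
theorem sequential_limiter_enforces_bounds
    (ρLim φbar lam Δg φimin φimax φjmin φjmax : ℝ)
    (hρ : 0 < ρLim) (hlam : 0 < lam)
    (hi : φimin ≤ φbar ∧ φbar ≤ φimax)
    (hj : φjmin ≤ φbar ∧ φbar ≤ φjmax)
    (ΔgLim : ℝ)
    (hLim : ΔgLim = if 0 ≤ Δg
        then min Δg (lam * ρLim * min (φimax - φbar) (φbar - φjmin))
        else max Δg (lam * ρLim * max (φimin - φbar) (φbar - φjmax))) :
    (ρLim * φimin ≤ ρLim * φbar + ΔgLim / lam ∧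
      ρLim * φbar + ΔgLim / lam ≤ ρLim * φimax) ∧
    (ρLim * φjmin ≤ ρLim * φbar - ΔgLim / lam ∧
      ρLim * φbar - ΔgLim / lam ≤ ρLim * φjmax) := by
  obtain ⟨hi1, hi2⟩ := hi
  obtain ⟨hj1, hj2⟩ := hj
  subst hLim
  split_ifs with h
  · set M := min Δg (lam * ρLim * min (φimax - φbar) (φbar - φjmin)) with hM
    have h1 : M ≤ lam * ρLim * (φimax - φbar) :=
      (min_le_right _ _).trans
        (mul_le_mul_of_nonneg_left (min_le_left _ _) (by positivity))
    have h2 : M ≤ lam * ρLim * (φbar - φjmin) :=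
      (min_le_right _ _).trans
        (mul_le_mul_of_nonneg_left (min_le_right _ _) (by positivity))
    have h0 : 0 ≤ M := le_min h (by
      have : (0:ℝ) ≤ min (φimax - φbar) (φbar - φjmin) :=
        le_min (by linarith) (by linarith)
      positivity)
    have hq0 : 0 ≤ M / lam := div_nonneg h0 hlam.le
    have hq1 : M / lam ≤ ρLim * (φimax - φbar) := by
      rw [div_le_iff₀ hlam]; nlinarith
    have hq2 : M / lam ≤ ρLim * (φbar - φjmin) := by
      rw [div_le_iff₀ hlam]; nlinarith
    refine ⟨⟨?_, ?_⟩, ?_, ?_⟩ <;> nlinarith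
  · set M := max Δg (lam * ρLim * max (φimin - φbar) (φbar - φjmax)) with hM
    have h1 : lam * ρLim * (φimin - φbar) ≤ M :=
      le_trans (mul_le_mul_of_nonneg_left (le_max_left _ _) (by positivity))
        (le_max_right _ _)
    have h2 : lam * ρLim * (φbar - φjmax) ≤ M :=
      le_trans (mul_le_mul_of_nonneg_left (le_max_right _ _) (by positivity))
        (le_max_right _ _)
    have h0 : M ≤ 0 := max_le (le_of_not_ge h) (by
      have hm : max (φimin - φbar) (φbar - φjmax) ≤ 0 :=
        max_le (by linarith) (by linarith)
      exact mul_nonpos_of_nonneg_of_nonpos (by positivity) hm)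
    have hq0 : M / lam ≤ 0 := div_nonpos_of_nonpos_of_nonneg h0 hlam.le
    have hq1 : ρLim * (φimin - φbar) ≤ M / lam := by
      rw [le_div_iff₀ hlam]; nlinarith
    have hq2 : ρLim * (φbar - φjmax) ≤ M / lam := by
      rw [le_div_iff₀ hlam]; nlinarith
    refine ⟨⟨?_, ?_⟩, ?_, ?_⟩ <;> nlinarith
end

section
/- For the scalar conservation law, the bar state satisfies a local maximum principle: if λ ≥ max over s between u_i and u_j of |f'(s)| and λ > 0, then min{u_i, u_j} ≤ ū_{(i,j)} = (u_i + u_j)/2 − (i−j)(f(u_i) − f(u_j))/(2λ) ≤ max{u_i, u_j}. -/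
/-- Local maximum principle for the scalar bar state under the wave speed bound
`λ ≥ |f'(s)|` on the interval between the two states. -/
theorem scalar_bar_state_max_principle
    (f : ℝ → ℝ) (hf : ContDiff ℝ 1 f)
    (ui uj : ℝ) (i j : ℤ) (hij : j = i - 1 ∨ j = i + 1)
    (lam : ℝ) (hlam : 0 < lam)
    (hspeed : ∀ s ∈ Set.uIcc ui uj, |deriv f s| ≤ lam) :
    min ui uj ≤ (ui + uj) / 2 - ((i - j : ℤ) : ℝ) * (f ui - f uj) / (2 * lam) ∧
    (ui + uj) / 2 - ((i - j : ℤ) : ℝ) * (f ui - f uj) / (2 * lam) ≤ max ui uj := by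
  have hdiff : ∀ s ∈ Set.uIcc ui uj, DifferentiableAt ℝ f s := fun s _ =>
    hf.differentiable one_ne_zero s
  have hlip : |f ui - f uj| ≤ lam * |ui - uj| := by
    have := (convex_uIcc ui uj).norm_image_sub_le_of_norm_deriv_le
      hdiff
      (fun s hs => by rw [Real.norm_eq_abs]; exact hspeed s hs)
      Set.right_mem_uIcc Set.left_mem_uIcc
    simpa [Real.norm_eq_abs] using this
  have hd : |((i - j : ℤ) : ℝ)| = 1 := by
    rcases hij with h | h <;> subst h <;> norm_num
  have hc : |((i - j : ℤ) : ℝ) * (f ui - f uj) / (2 * lam)| ≤ |ui - uj| / 2 := by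
    rw [abs_div, abs_mul, hd, one_mul, abs_of_pos (by linarith : (0:ℝ) < 2 * lam)]
    rw [div_le_div_iff₀ (by linarith) (by norm_num)]
    nlinarith [abs_nonneg (ui - uj)]
  rw [abs_le] at hc
  rcases le_total ui uj with h | h
  · rw [min_eq_left h, max_eq_right h, abs_of_nonpos (by linarith : ui - uj ≤ 0)] at *
    constructor <;> linarith
  · rw [min_eq_right h, max_eq_left h, abs_of_nonneg (by linarith : 0 ≤ ui - uj)] at *
    constructor <;> linarith
end
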